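/- arXiv:1803.01981 — 5 statements merged into one kernel-verified Lean document; each statement's English description precedes it below -/
import Mathlib

section
/- Assume the set N₀ = {0} ∪ {α ∈ C : h(α) = 0 and |α| = δ₀} has exactly Q = q^d elements (i.e., h admits the canonical submodule). Then the monic polynomial Φ₀(X) = ∏_{α ∈ N₀}(X − α) of degree q^d satisfies Φ₀(X) ≡ X^{q^d} modulo elements of positive valuation: every non-leading coefficient γ of Φ₀ satisfies v(γ) > 0. In other words, the canonical submodule scheme is a lift of the q^d-power Frobenius. -/
/-!
By Vieta, the coefficient of `X ^ j` in `Φ₀ = ∏_{α ∈ N₀} (X - α)` is `± e_{Q-j}(N₀)`, and for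
`j < Q` every monomial of `e_{Q-j}` contains at least one element of `N₀`. The elements of `N₀`
have norm `< 1` (the nonzero ones are roots of `h` of norm `δ₀`), so each monomial has norm `< 1`,
and by the ultrametric inequality so does their sum.
-/

open Polynomial

namespace Multiset

variable {R : Type*} [SeminormedCommRing R]

theorem norm_prod_lt_one {t : Multiset R} (ht : t ≠ 0) (h : ∀ x ∈ t, ‖x‖ < 1) :
    ‖t.prod‖ < 1 := by
  induction t using Multiset.induction_on with
  | empty => exact absurd rfl ht
  | cons a t ih =>
    have ha : ‖a‖ < 1 := h a (mem_cons_self a t)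
    rcases eq_or_ne t 0 with rfl | ht'
    · simpa using ha
    have htail : ‖t.prod‖ < 1 := ih ht' fun x hx => h x (mem_cons_of_mem hx)
    rw [prod_cons]
    exact (norm_mul_le a t.prod).trans_lt
      (mul_lt_one_of_nonneg_of_lt_one_left (norm_nonneg a) ha htail.le)

variable [IsUltrametricDist R]

theorem norm_esymm_lt_one {s : Multiset R} {k : ℕ} (hk : 0 < k)
    (hs : ∀ x ∈ s, ‖x‖ < 1) : ‖s.esymm k‖ < 1 := by
  obtain ⟨t, hts, hle⟩ :=
    IsUltrametricDist.exists_norm_multiset_sum_le (s.powersetCard k) (f := prod)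
  rw [esymm]
  rcases eq_or_ne (s.powersetCard k) 0 with hempty | hne
  · simp [hempty]
  obtain ⟨hts, hcard⟩ := mem_powersetCard.mp (hts hne)
  refine hle.trans_lt (norm_prod_lt_one ?_ fun x hx => hs x (mem_of_le hts hx))
  rwa [← card_pos, hcard]

theorem norm_coeff_prod_X_sub_C_lt_one {s : Multiset R} (hs : ∀ x ∈ s, ‖x‖ < 1)
    {j : ℕ} (hj : j < card s) : ‖(s.map fun α => X - C α).prod.coeff j‖ < 1 := by
  rw [prod_X_sub_C_coeff s hj.le]
  have hesymm := norm_esymm_lt_one (Nat.sub_pos_of_lt hj) hs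
  rcases neg_one_pow_eq_or R (card s - j) with hsign | hsign <;>
    simpa [hsign] using hesymm

end Multiset

theorem canonical_factor_is_frobenius_lift_general
    {C : Type*} [NontriviallyNormedField C] [IsUltrametricDist C]
    (q : ℕ)
    (d : ℕ)
    (h : Polynomial C)
    -- every nonzero root of h has positive valuation
    (hroots : ∀ α : C, Polynomial.eval α h = 0 → α ≠ 0 → ‖α‖ < 1)
    (δ₀ : ℝ)
    (hδ₀ : IsLeast {t : ℝ | ∃ α : C, α ≠ 0 ∧ Polynomial.eval α h = 0 ∧ t = ‖α‖} δ₀)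
    (N₀ : Set C)
    (hN₀ : N₀ = {0} ∪ {α : C | Polynomial.eval α h = 0 ∧ ‖α‖ = δ₀})
    (hfin : N₀.Finite)
    (hcard : hfin.toFinset.card = q ^ d)
    (Φ₀ : Polynomial C)
    (hΦ₀ : Φ₀ = ∏ α ∈ hfin.toFinset, (Polynomial.X - Polynomial.C α)) :
    Φ₀.Monic ∧ Φ₀.natDegree = q ^ d ∧ ∀ j < q ^ d, ‖Φ₀.coeff j‖ < 1 := by
  have hδ₀_lt_one : δ₀ < 1 := by
    obtain ⟨α, hα0, hαroot, rfl⟩ := hδ₀.1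
    exact hroots α hαroot hα0
  have hN₀_lt_one : ∀ α ∈ hfin.toFinset.val, ‖α‖ < 1 := by
    intro α hα
    rw [Finset.mem_val, Set.Finite.mem_toFinset, hN₀] at hα
    rcases hα with rfl | ⟨-, hαnorm⟩
    · simp
    · exact hαnorm ▸ hδ₀_lt_one
  subst hΦ₀
  refine ⟨monic_prod_of_monic _ _ fun α _ => monic_X_sub_C α, ?_, fun j hj => ?_⟩
  · rw [natDegree_prod_of_monic _ _ fun α _ => monic_X_sub_C α]
    simp [hcard]
  · rw [Finset.prod_eq_multiset_prod]
    exact Multiset.norm_coeff_prod_X_sub_C_lt_one hN₀_lt_one (by simpa [hcard] using hj)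

/-- If `N₀ = {0} ∪ {α : h(α) = 0, ‖α‖ = δ₀}` has exactly `q^d` elements, then
`Φ₀(X) = ∏_{α ∈ N₀} (X - α)` is a monic polynomial of degree `q^d` all of whose non-leading
coefficients have positive valuation (norm `< 1`); i.e. `Φ₀ ≡ X^{q^d}` modulo the maximal
ideal, so the canonical submodule scheme is a lift of the `q^d`-power Frobenius. -/
theorem canonical_factor_is_frobenius_lift
    {C : Type*} [NontriviallyNormedField C] [IsUltrametricDist C] [CompleteSpace C]
    [IsAlgClosed C]
    (p : ℕ) (hp : p.Prime) [CharP C p]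
    (q : ℕ) (n : ℕ) (hn : 0 < n) (hq : q = p ^ n)
    (d : ℕ) (hd : 1 ≤ d)
    (π : C) (hπ0 : π ≠ 0) (hπ1 : ‖π‖ < 1)
    (r : ℕ) (hr : 2 ≤ r)
    (H : ℕ → C) (hHint : ∀ i, ‖H i‖ ≤ 1) (hH0 : H 0 = π) (hHrd : ‖H (r * d)‖ = 1)
    (h : Polynomial C)
    (hh : h = ∑ i ∈ Finset.range (r * d + 1), Polynomial.C (H i) * Polynomial.X ^ q ^ i)
    -- every nonzero root of h has positive valuation
    (hroots : ∀ α : C, Polynomial.eval α h = 0 → α ≠ 0 → ‖α‖ < 1)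
    (δ₀ : ℝ)
    (hδ₀ : IsLeast {t : ℝ | ∃ α : C, α ≠ 0 ∧ Polynomial.eval α h = 0 ∧ t = ‖α‖} δ₀)
    (N₀ : Set C)
    (hN₀ : N₀ = {0} ∪ {α : C | Polynomial.eval α h = 0 ∧ ‖α‖ = δ₀})
    (hfin : N₀.Finite)
    (hcard : hfin.toFinset.card = q ^ d)
    (Φ₀ : Polynomial C)
    (hΦ₀ : Φ₀ = ∏ α ∈ hfin.toFinset, (Polynomial.X - Polynomial.C α)) :
    Φ₀.Monic ∧ Φ₀.natDegree = q ^ d ∧ ∀ j < q ^ d, ‖Φ₀.coeff j‖ < 1 :=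
  canonical_factor_is_frobenius_lift_general q d h hroots δ₀ hδ₀ N₀ hN₀ hfin hcard Φ₀ hΦ₀
end

section
/- Let R be a commutative ring of characteristic p containing a finite field F of cardinality Q = q^d, where q is a power of the prime p. Let Λ : F → R⟦X⟧ be a map with Λ_0 = 0 such that, for all λ, μ ∈ F, the power series Λ_λ has zero constant term and coefficient of X equal to λ, and Λ_λ ∘ Λ_μ = Λ_{λμ} (composition/substitution of power series). Fix a generator σ of the cyclic group F^× and set g := Σ_{k=1}^{Q−1} σ^{−k} Λ_{σ^k} ∈ R⟦X⟧. Then the coefficient of X in g equals −1 (so g = −X + higher-order terms, and g admits a composition inverse g^{−1} ∈ R⟦X⟧), and for every λ ∈ F one has g ∘ Λ_λ = λ·g as formal power series; equivalently g ∘ Λ_λ ∘ g^{−1} = λX. -/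
/-- Composition (substitution) `f ∘ g` of formal power series; this agrees with the usual
substitution of `g` into `f` whenever `g` has zero constant term. -/
noncomputable def psComp {R : Type*} [CommRing R] (f g : PowerSeries R) : PowerSeries R :=
  PowerSeries.mk fun n =>
    ∑ k ∈ Finset.range (n + 1), PowerSeries.coeff k f * PowerSeries.coeff n (g ^ k)

namespace PsCompAux

open PowerSeries Finset

variable {R : Type*} [CommRing R]

lemma coeff_psComp (f g : PowerSeries R) (n : ℕ) :
    coeff n (psComp f g) = ∑ k ∈ range (n + 1), coeff k f * coeff n (g ^ k) := by
  simp [psComp]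

lemma constantCoeff_psComp (f g : PowerSeries R) :
    constantCoeff (psComp f g) = constantCoeff f := by
  have := coeff_psComp f g 0
  simpa using this

lemma coeff_pow_eq_zero {h : PowerSeries R} (hh : constantCoeff h = 0)
    {m k : ℕ} (hmk : m < k) : coeff m (h ^ k) = 0 := by
  have hX : (X : PowerSeries R) ∣ h := X_dvd_iff.2 hh
  exact X_pow_dvd_iff.1 (pow_dvd_pow_of_dvd hX k) m hmk

lemma psComp_C_mul (c : R) (f h : PowerSeries R) :
    psComp (PowerSeries.C c * f) h = PowerSeries.C c * psComp f h := by
  ext n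
  simp [coeff_psComp, Finset.mul_sum, mul_assoc]

lemma psComp_sum {ι : Type*} (s : Finset ι) (f : ι → PowerSeries R) (h : PowerSeries R) :
    psComp (∑ i ∈ s, f i) h = ∑ i ∈ s, psComp (f i) h := by
  ext n
  simp [coeff_psComp, Finset.sum_mul]
  rw [Finset.sum_comm]

lemma psComp_zero_right (f : PowerSeries R) :
    psComp f 0 = PowerSeries.C (constantCoeff f) := by
  ext n
  rw [coeff_psComp]
  rw [Finset.sum_eq_single 0]
  · simp [coeff_zero_eq_constantCoeff]
    cases n <;> simp [PowerSeries.coeff_one]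
  · intro k _ hk
    simp [zero_pow hk]
  · simp

lemma psComp_X_left {h : PowerSeries R} (hh : constantCoeff h = 0) :
    psComp PowerSeries.X h = h := by
  ext n
  rw [coeff_psComp, Finset.sum_eq_single 1]
  · cases n with
    | zero => simp [coeff_zero_eq_constantCoeff, hh]
    | succ n => simp
  · intro k _ hk
    simp [PowerSeries.coeff_X, hk]
  · intro h1
    simp only [Finset.mem_range] at h1
    obtain rfl : n = 0 := by omega
    simp [coeff_zero_eq_constantCoeff, hh]

lemma psComp_X_right (f : PowerSeries R) : psComp f PowerSeries.X = f := by
  ext n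
  rw [coeff_psComp, Finset.sum_eq_single n]
  · simp [PowerSeries.coeff_X_pow]
  · intro k _ hk
    simp [PowerSeries.coeff_X_pow, hk, Ne.symm hk]
  · intro hn
    simp at hn

lemma psComp_one_left (h : PowerSeries R) : psComp 1 h = 1 := by
  ext n
  rw [coeff_psComp, Finset.sum_eq_single 0]
  · simp
  · intro k _ hk
    simp [PowerSeries.coeff_one, hk]
  · simp

lemma coeff_pow_congr {r s : PowerSeries R} (hr : constantCoeff r = 0)
    (hs : constantCoeff s = 0) {n : ℕ} (h : ∀ m < n, coeff m r = coeff m s)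
    {k : ℕ} (hk : 2 ≤ k) : coeff n (r ^ k) = coeff n (s ^ k) := by
  have h1 : (X : PowerSeries R) ^ n ∣ r - s := by
    rw [X_pow_dvd_iff]
    intro m hm
    simp [h m hm]
  have h2 : (X : PowerSeries R) ∣ ∑ i ∈ range k, r ^ i * s ^ (k - 1 - i) := by
    refine Finset.dvd_sum fun i hi => ?_
    rcases Nat.eq_zero_or_pos i with h0 | h0
    · subst h0
      have : (X : PowerSeries R) ∣ s ^ (k - 1) :=
        dvd_pow (X_dvd_iff.2 hs) (by omega)
      simpa using this
    · exact Dvd.dvd.mul_right (dvd_pow (X_dvd_iff.2 hr) (by omega)) _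
  have h3 : (X : PowerSeries R) ^ (n + 1) ∣ r ^ k - s ^ k := by
    rw [← geom_sum₂_mul, pow_succ']
    exact mul_dvd_mul h2 h1
  have h4 := X_pow_dvd_iff.1 h3 n (Nat.lt_succ_self n)
  rw [map_sub, sub_eq_zero] at h4
  exact h4

lemma psComp_mul (f₁ f₂ h : PowerSeries R) (hh : constantCoeff h = 0) :
    psComp (f₁ * f₂) h = psComp f₁ h * psComp f₂ h := by
  ext n
  rw [PowerSeries.coeff_mul, coeff_psComp]
  have L : ∑ k ∈ range (n + 1), coeff k (f₁ * f₂) * coeff n (h ^ k)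
      = ∑ p ∈ range (n+1) ×ˢ range (n+1),
          coeff p.1 f₁ * coeff p.2 f₂ * coeff n (h ^ (p.1 + p.2)) := by
    have e1 : ∀ k ∈ range (n+1), coeff k (f₁ * f₂) * coeff n (h ^ k)
        = ∑ p ∈ HasAntidiagonal.antidiagonal k,
            coeff p.1 f₁ * coeff p.2 f₂ * coeff n (h ^ (p.1 + p.2)) := by
      intro k _
      rw [PowerSeries.coeff_mul, Finset.sum_mul]
      refine Finset.sum_congr rfl fun p hp => ?_
      rw [Finset.HasAntidiagonal.mem_antidiagonal] at hp
      rw [hp]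
    rw [Finset.sum_congr rfl e1]
    have hdisj : (↑(range (n+1)) : Set ℕ).PairwiseDisjoint
        (fun k => (HasAntidiagonal.antidiagonal k : Finset (ℕ × ℕ))) := by
      intro a _ b _ hab
      simp only [Function.onFun, Finset.disjoint_left]
      intro p hp hp'
      rw [Finset.HasAntidiagonal.mem_antidiagonal] at hp hp'
      exact hab (hp ▸ hp')
    rw [← Finset.sum_biUnion hdisj]
    apply Finset.sum_subset
    · intro p hp
      simp only [Finset.mem_biUnion, Finset.mem_range, Finset.HasAntidiagonal.mem_antidiagonal] at hp
      obtain ⟨k, hk, hpk⟩ := hp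
      simp only [Finset.mem_product, Finset.mem_range]
      omega
    · intro p hp hnp
      simp only [Finset.mem_biUnion, Finset.mem_range, Finset.HasAntidiagonal.mem_antidiagonal] at hnp
      push_neg at hnp
      have : n < p.1 + p.2 := by
        by_contra hc
        exact hnp (p.1 + p.2) (by omega) rfl
      rw [coeff_pow_eq_zero hh this, mul_zero]
  rw [L]
  have step : ∀ a ∈ range (n+1), ∀ f : PowerSeries R,
      coeff a (psComp f h) = ∑ i ∈ range (n+1), coeff i f * coeff a (h ^ i) := by
    intro a ha f
    rw [coeff_psComp]
    apply Finset.sum_subset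
    · apply Finset.range_subset_range.2
      rw [Finset.mem_range] at ha
      omega
    · intro i _ hni
      rw [Finset.mem_range, not_lt] at hni
      rw [coeff_pow_eq_zero hh (by omega), mul_zero]
  have R1 : ∀ ab ∈ HasAntidiagonal.antidiagonal n,
      coeff ab.1 (psComp f₁ h) * coeff ab.2 (psComp f₂ h)
      = ∑ p ∈ range (n+1) ×ˢ range (n+1),
          (coeff p.1 f₁ * coeff ab.1 (h ^ p.1)) *
          (coeff p.2 f₂ * coeff ab.2 (h ^ p.2)) := by
    intro ab hab
    rw [Finset.HasAntidiagonal.mem_antidiagonal] at hab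
    rw [step ab.1 (by rw [Finset.mem_range]; omega) f₁,
        step ab.2 (by rw [Finset.mem_range]; omega) f₂,
        Finset.sum_mul_sum, ← Finset.sum_product']
  rw [Finset.sum_congr rfl R1, Finset.sum_comm]
  refine Finset.sum_congr rfl fun p _ => ?_
  rw [pow_add, PowerSeries.coeff_mul, Finset.mul_sum]
  refine Finset.sum_congr rfl fun ab _ => ?_
  ring

lemma psComp_pow (g h : PowerSeries R) (hh : constantCoeff h = 0) (j : ℕ) :
    psComp (g ^ j) h = (psComp g h) ^ j := by
  induction j with
  | zero => simpa using psComp_one_left h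
  | succ j ih => rw [pow_succ, psComp_mul _ _ _ hh, ih, pow_succ]

lemma psComp_assoc (f g h : PowerSeries R) (hg : constantCoeff g = 0)
    (hh : constantCoeff h = 0) :
    psComp (psComp f g) h = psComp f (psComp g h) := by
  ext n
  rw [coeff_psComp, coeff_psComp]
  have e1 : ∀ k ∈ range (n+1), coeff k (psComp f g) * coeff n (h ^ k)
      = ∑ j ∈ range (n+1), coeff j f * (coeff k (g ^ j) * coeff n (h ^ k)) := by
    intro k hk
    rw [coeff_psComp, Finset.sum_mul]
    rw [Finset.mem_range] at hk
    rw [Finset.sum_subset (Finset.range_subset_range.2 (by omega : k + 1 ≤ n + 1))]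
    · exact Finset.sum_congr rfl fun j _ => by ring
    · intro j _ hj
      rw [Finset.mem_range, not_lt] at hj
      rw [coeff_pow_eq_zero hg (by omega), mul_zero, zero_mul]
  rw [Finset.sum_congr rfl e1, Finset.sum_comm]
  refine Finset.sum_congr rfl fun j _ => ?_
  rw [← psComp_pow g h hh j, coeff_psComp, Finset.mul_sum]

noncomputable def invCoeff (f : PowerSeries R) (v : R) : ℕ → R
  | 0 => 0
  | n + 1 =>
    v * ((if n = 0 then 1 else 0) -
      ∑ k ∈ Finset.Icc 2 (n + 1), PowerSeries.coeff k f *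
        PowerSeries.coeff (n + 1)
          ((PowerSeries.mk fun m => if h : m < n + 1 then invCoeff f v m else 0) ^ k))
  termination_by n => n
  decreasing_by exact h

lemma exists_right_inv (f : PowerSeries R) (hf0 : constantCoeff f = 0)
    (v : R) (hv : coeff 1 f * v = 1) :
    ∃ r : PowerSeries R, constantCoeff r = 0 ∧ psComp f r = PowerSeries.X := by
  set r : PowerSeries R := PowerSeries.mk (invCoeff f v) with hr
  have hr0 : constantCoeff r = 0 := by
    rw [hr, ← coeff_zero_eq_constantCoeff_apply, PowerSeries.coeff_mk, invCoeff]
  refine ⟨r, hr0, ?_⟩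
  ext N
  cases N with
  | zero =>
    rw [coeff_psComp]
    simp [hf0]
  | succ n =>
    set s : PowerSeries R :=
      PowerSeries.mk fun m => if h : m < n + 1 then invCoeff f v m else 0 with hs
    have hs0 : constantCoeff s = 0 := by
      rw [hs, ← coeff_zero_eq_constantCoeff_apply, PowerSeries.coeff_mk]
      simp [invCoeff]
    have hagree : ∀ m < n + 1, coeff m r = coeff m s := by
      intro m hm
      rw [hr, hs, PowerSeries.coeff_mk, PowerSeries.coeff_mk, dif_pos hm]
    have hsplit : range (n + 2) = insert 0 (insert 1 (Finset.Icc 2 (n + 1))) := by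
      ext x
      simp only [Finset.mem_range, Finset.mem_insert, Finset.mem_Icc]
      omega
    rw [coeff_psComp, hsplit, Finset.sum_insert (by simp),
      Finset.sum_insert (by simp)]
    have t0 : coeff 0 f * coeff (n+1) (r ^ 0) = 0 := by
      rw [coeff_zero_eq_constantCoeff_apply, hf0, zero_mul]
    have t2 : ∑ k ∈ Finset.Icc 2 (n + 1), coeff k f * coeff (n+1) (r ^ k)
        = ∑ k ∈ Finset.Icc 2 (n + 1), coeff k f * coeff (n+1) (s ^ k) := by
      refine Finset.sum_congr rfl fun k hk => ?_
      rw [Finset.mem_Icc] at hk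
      rw [coeff_pow_congr hr0 hs0 hagree hk.1]
    have t1 : coeff 1 f * coeff (n+1) (r ^ 1)
        = (if n = 0 then 1 else 0)
          - ∑ k ∈ Finset.Icc 2 (n + 1), coeff k f * coeff (n+1) (s ^ k) := by
      rw [pow_one, hr, PowerSeries.coeff_mk]
      show coeff 1 f * invCoeff f v (n+1) = _
      rw [invCoeff, ← mul_assoc, hv, one_mul]
    rw [t0, t2, t1, PowerSeries.coeff_X]
    have he : ((n+1 = 1) ↔ (n = 0)) := by omega
    simp only [he]
    ring

end PsCompAux

open PsCompAux PowerSeries Finset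

/-- Let `R` be a commutative ring of characteristic `p` containing a finite
field `F` with `#F = Q = q^d`, let `Λ : F → R⟦X⟧` satisfy `Λ_0 = 0`, each `Λ_λ` has zero
constant term and linear coefficient `λ`, and `Λ_λ ∘ Λ_μ = Λ_{λμ}`.  Fix a generator `σ` of
`Fˣ` and set `g = Σ_{k=1}^{Q-1} σ^{-k} Λ_{σ^k}`.  Then the linear coefficient of `g` is `-1`
(and its constant term is `0`, so `g` admits a composition inverse `g⁻¹`), and
`g ∘ Λ_λ = λ·g` for all `λ ∈ F`; equivalently `g ∘ Λ_λ ∘ g⁻¹ = λX`. -/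
theorem change_of_variable_linearizes_F_action
    {R : Type*} [CommRing R] (p : ℕ) (hp : p.Prime) [CharP R p]
    (q : ℕ) (m : ℕ) (hm : 0 < m) (hq : q = p ^ m)
    (d : ℕ) (hd : 1 ≤ d)
    {F : Type*} [Field F] [Fintype F] (hcard : Fintype.card F = q ^ d)
    (ι : F →+* R)
    (Λ : F → PowerSeries R)
    (hΛ0 : Λ 0 = 0)
    (hconst : ∀ a : F, PowerSeries.constantCoeff (Λ a) = 0)
    (hlin : ∀ a : F, PowerSeries.coeff 1 (Λ a) = ι a)
    (hmul : ∀ a b : F, psComp (Λ a) (Λ b) = Λ (a * b))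
    (σ : Fˣ) (hσ : ∀ u : Fˣ, u ∈ Subgroup.zpowers σ)
    (g : PowerSeries R)
    (hg : g = ∑ k ∈ Finset.Icc 1 (q ^ d - 1),
      PowerSeries.C (ι ((σ⁻¹ ^ k : Fˣ) : F)) * Λ ((σ ^ k : Fˣ) : F)) :
    PowerSeries.constantCoeff g = 0 ∧
    PowerSeries.coeff 1 g = -1 ∧
    (∀ a : F, psComp g (Λ a) = PowerSeries.C (ι a) * g) ∧
    ∃ ginv : PowerSeries R,
      PowerSeries.constantCoeff ginv = 0 ∧
      psComp g ginv = PowerSeries.X ∧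
      psComp ginv g = PowerSeries.X ∧
      ∀ a : F, psComp (psComp g (Λ a)) ginv = PowerSeries.C (ι a) * PowerSeries.X := by
  classical
  -- basic numerics
  have hq2 : 2 ≤ q := by
    rw [hq]
    calc 2 ≤ p := hp.two_le
    _ = p ^ 1 := (pow_one p).symm
    _ ≤ p ^ m := Nat.pow_le_pow_right hp.pos hm
  have hQ2 : 2 ≤ q ^ d := by
    calc 2 ≤ q := hq2
    _ = q ^ 1 := (pow_one q).symm
    _ ≤ q ^ d := Nat.pow_le_pow_right (by omega) hd
  set M : ℕ := q ^ d - 1 with hM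
  have hM1 : 1 ≤ M := by omega
  -- order of σ
  have hord : orderOf σ = M := by
    rw [orderOf_eq_card_of_forall_mem_zpowers hσ, Nat.card_units,
      Nat.card_eq_fintype_card, hcard]
  -- constant coefficient of g
  have hgcc : PowerSeries.constantCoeff g = 0 := by
    rw [hg, map_sum]
    refine Finset.sum_eq_zero fun k _ => ?_
    rw [← coeff_zero_eq_constantCoeff_apply, PowerSeries.coeff_C_mul,
      coeff_zero_eq_constantCoeff_apply, hconst, mul_zero]
  -- linear coefficient of g
  have hg1 : PowerSeries.coeff 1 g = -1 := by
    rw [hg, map_sum]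
    have e1 : ∀ k ∈ Finset.Icc 1 M,
        PowerSeries.coeff 1 (PowerSeries.C (ι ((σ⁻¹ ^ k : Fˣ) : F)) * Λ ((σ ^ k : Fˣ) : F))
        = 1 := by
      intro k _
      rw [PowerSeries.coeff_C_mul, hlin, ← map_mul, ← Units.val_mul, inv_pow,
        inv_mul_cancel, Units.val_one, map_one]
    rw [Finset.sum_congr rfl e1, Finset.sum_const, Nat.card_Icc]
    have hcast : ((q ^ d : ℕ) : R) = 0 := by
      have hp0 : ((p : ℕ) : R) = 0 := CharP.cast_eq_zero R p
      rw [hq]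
      push_cast
      rw [hp0, zero_pow (by omega), zero_pow (by omega)]
    have : ((M : ℕ) : R) = -1 := by
      rw [hM, Nat.cast_sub (by omega), hcast, Nat.cast_one, zero_sub]
    have h2 : M + 1 - 1 = M := by omega
    rw [h2, nsmul_eq_mul, mul_one]
    exact this
  -- g as a sum over units
  have hgu : g = ∑ u : Fˣ, PowerSeries.C (ι ((u⁻¹ : Fˣ) : F)) * Λ ((u : F)) := by
    rw [hg]
    refine Finset.sum_bij (fun k _ => σ ^ k) (fun k _ => Finset.mem_univ _) ?_ ?_ ?_
    · -- injective
      intro a ha b hb hab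
      rw [Finset.mem_Icc] at ha hb
      have hmod := pow_inj_mod.1 hab
      rw [hord] at hmod
      rcases Nat.lt_or_ge a M with h1 | h1
      · rcases Nat.lt_or_ge b M with h2 | h2
        · rwa [Nat.mod_eq_of_lt h1, Nat.mod_eq_of_lt h2] at hmod
        · have hb' : b = M := by omega
          rw [Nat.mod_eq_of_lt h1, hb', Nat.mod_self] at hmod
          omega
      · have ha' : a = M := by omega
        rcases Nat.lt_or_ge b M with h2 | h2
        · rw [ha', Nat.mod_self, Nat.mod_eq_of_lt h2] at hmod
          omega
        · have hb' : b = M := by omega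
          rw [ha', hb']
    · -- surjective
      intro u _
      obtain ⟨n, hn⟩ := Submonoid.mem_powers_iff u σ |>.1 (mem_powers_iff_mem_zpowers.2 (hσ u))
      by_cases h0 : n % M = 0
      · refine ⟨M, Finset.mem_Icc.2 ⟨hM1, le_refl M⟩, ?_⟩
        show σ ^ M = u
        rw [← hn]
        conv_rhs => rw [← pow_mod_orderOf, hord, h0]
        rw [pow_zero, ← hord]
        exact pow_orderOf_eq_one σ
      · refine ⟨n % M, Finset.mem_Icc.2 ⟨by omega, le_of_lt (Nat.mod_lt n (by omega))⟩, ?_⟩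
        show σ ^ (n % M) = u
        rw [← hn, ← hord]
        exact pow_mod_orderOf σ n
    · -- values agree
      intro k _
      rw [inv_pow]
  -- the main commutation relation
  have hcomm : ∀ a : F, psComp g (Λ a) = PowerSeries.C (ι a) * g := by
    intro a
    by_cases ha : a = 0
    · subst ha
      rw [hΛ0, psComp_zero_right, hgcc]
      simp
    · set v : Fˣ := Units.mk0 a ha with hv
      have hva : (v : F) = a := rfl
      rw [hgu, psComp_sum]
      have e2 : ∀ u : Fˣ,
          psComp (PowerSeries.C (ι ((u⁻¹ : Fˣ) : F)) * Λ ((u : F))) (Λ a)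
          = PowerSeries.C (ι ((u⁻¹ : Fˣ) : F)) * Λ (((u * v : Fˣ) : F)) := by
        intro u
        rw [psComp_C_mul, hmul, ← hva, Units.val_mul]
      rw [Finset.sum_congr rfl fun u _ => e2 u]
      rw [Finset.mul_sum]
      refine Fintype.sum_equiv (Equiv.mulRight v) _ _ fun u => ?_
      simp only [Equiv.coe_mulRight]
      rw [← mul_assoc, ← map_mul]
      have huv : v * (u * v)⁻¹ = u⁻¹ := by group
      rw [← hva, ← map_mul, ← Units.val_mul, huv]
  refine ⟨hgcc, hg1, hcomm, ?_⟩
  -- inverse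
  obtain ⟨r, hr0, hgr⟩ := exists_right_inv g hgcc (-1) (by rw [hg1]; ring)
  have hr1 : PowerSeries.coeff 1 r * (-1) = 1 := by
    have h1 := congrArg (PowerSeries.coeff 1) hgr
    rw [coeff_psComp] at h1
    rw [show Finset.range 2 = {0, 1} from rfl] at h1
    rw [Finset.sum_insert (by simp), Finset.sum_singleton] at h1
    simp only [pow_zero, pow_one, coeff_zero_eq_constantCoeff_apply, hgcc, zero_mul,
      PowerSeries.coeff_one, PowerSeries.coeff_X, hg1] at h1
    norm_num at h1
    linear_combination h1
  obtain ⟨r', hr'0, hrr'⟩ := exists_right_inv r hr0 (-1) hr1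
  have hgeq : g = r' := by
    have h1 := (psComp_assoc g r r' hr0 hr'0).symm
    rw [hrr', hgr, psComp_X_right, psComp_X_left hr'0] at h1
    exact h1
  refine ⟨r, hr0, hgr, ?_, ?_⟩
  · rw [hgeq]
    exact hrr'
  · intro a
    rw [hcomm a, psComp_C_mul, hgr]
end

section
/- Let L be an integral domain containing a finite field F of cardinality Q = q^d, where q is a prime power and d ≥ 1. Let f ∈ L⟦X⟧ be a formal power series whose coefficients vanish outside exponents that are powers of q, i.e. f = Σ_{i≥0} a_i X^{q^i}, and suppose that f(λX) = λ·f(X) for every λ ∈ F (an identity of formal power series, equivalently a_i λ^{q^i} = λ a_i for all i ≥ 0 and all λ ∈ F). Then a_i = 0 whenever d does not divide i; that is, f = Σ_{i≥0} a_{id} X^{q^{id}}. -/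
/-! If `a_i ≠ 0`, comparing the coefficients of `X ^ q ^ i` in `f(λX) = λ f(X)` shows that
every `λ ∈ F` satisfies `λ ^ q ^ i = λ`. Hence the cyclic group `Fˣ` of order `q ^ d - 1` has
exponent dividing `q ^ i - 1`, and `gcd (q ^ d - 1) (q ^ i - 1) = q ^ gcd d i - 1` forces `d ∣ i`. -/

theorem Nat.dvd_of_pow_sub_one_dvd_pow_sub_one {q d i : ℕ} (hq : 2 ≤ q)
    (h : q ^ d - 1 ∣ q ^ i - 1) : d ∣ i := by
  have hgcd : q ^ Nat.gcd d i - 1 = q ^ d - 1 := by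
    rw [← Nat.pow_sub_one_gcd_pow_sub_one, Nat.gcd_eq_left h]
  have hpow : q ^ Nat.gcd d i = q ^ d :=
    Nat.sub_one_cancel (Nat.pow_pos (by omega)) (Nat.pow_pos (by omega)) hgcd
  exact Nat.gcd_eq_left_iff_dvd.mp (Nat.pow_right_injective hq hpow)

theorem PowerSeries.pow_eq_self_of_rescale_eq_C_mul {R : Type*} [CommSemiring R]
    [IsRightCancelMulZero R] {f : PowerSeries R} {a : R} (h : rescale a f = C a * f) {n : ℕ}
    (hn : coeff n f ≠ 0) : a ^ n = a := by
  have hcoeff := congrArg (coeff n) h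
  rw [coeff_rescale, coeff_C_mul] at hcoeff
  exact mul_right_cancel₀ hn hcoeff

theorem FiniteField.two_le_of_card_eq_pow {F : Type*} [Field F] [Fintype F] {q d : ℕ}
    (hcard : Fintype.card F = q ^ d) : 2 ≤ q := by
  by_contra! hq
  have hle : q ^ d ≤ 1 := pow_le_one₀ (Nat.zero_le q) (by omega)
  have := Fintype.one_lt_card (α := F)
  omega

theorem FiniteField.dvd_of_forall_pow_pow_eq_self {F : Type*} [Field F] [Fintype F] {q d i : ℕ}
    (hcard : Fintype.card F = q ^ d) (h : ∀ a : F, a ^ q ^ i = a) : d ∣ i := by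
  have hq := two_le_of_card_eq_pow hcard
  have hunits : ∀ x : Fˣ, x ^ (q ^ i - 1) = 1 := fun x => by
    have hx : x ^ (q ^ i - 1) * x = x := by
      rw [pow_sub_one_mul (Nat.pow_pos (by omega)).ne']
      exact Units.ext (by simpa using h x)
    exact mul_eq_right.mp hx
  rw [forall_pow_eq_one_iff, hcard] at hunits
  exact Nat.dvd_of_pow_sub_one_dvd_pow_sub_one hq hunits

theorem F_linear_power_series_supported_on_qd_powers_general
    {L : Type*} [CommRing L] [IsDomain L]
    (q : ℕ)
    (d : ℕ)
    {F : Type*} [Field F] [Fintype F] (hcard : Fintype.card F = q ^ d)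
    (ι : F →+* L)
    (f : PowerSeries L)
    (hlin : ∀ a : F, PowerSeries.rescale (ι a) f = PowerSeries.C (ι a) * f) :
    ∀ i : ℕ, ¬ d ∣ i → PowerSeries.coeff (q ^ i) f = 0 := by
  intro i hdi
  by_contra hcoeff
  have hfixed : ∀ a : F, a ^ q ^ i = a := fun a =>
    ι.injective (by simpa using PowerSeries.pow_eq_self_of_rescale_eq_C_mul (hlin a) hcoeff)
  exact hdi (FiniteField.dvd_of_forall_pow_pow_eq_self hcard hfixed)

/-- Let `L` be an integral domain containing a finite field `F` of cardinality
`Q = q^d` (`q` a prime power, `d ≥ 1`).  If `f ∈ L⟦X⟧` is supported on exponents that are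
powers of `q`, i.e. `f = Σ_{i≥0} a_i X^{q^i}`, and `f(λX) = λ·f(X)` for every `λ ∈ F`, then
`a_i = 0` whenever `d ∤ i`; that is, `f = Σ_{i≥0} a_{id} X^{q^{id}}`. -/
theorem F_linear_power_series_supported_on_qd_powers
    {L : Type*} [CommRing L] [IsDomain L]
    (p q : ℕ) (hp : p.Prime) (m : ℕ) (hm : 0 < m) (hq : q = p ^ m)
    (d : ℕ) (hd : 1 ≤ d)
    {F : Type*} [Field F] [Fintype F] (hcard : Fintype.card F = q ^ d)
    (ι : F →+* L)
    (f : PowerSeries L)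
    (hsupp : ∀ n : ℕ, (∀ i : ℕ, n ≠ q ^ i) → PowerSeries.coeff n f = 0)
    (hlin : ∀ a : F, PowerSeries.rescale (ι a) f = PowerSeries.C (ι a) * f) :
    ∀ i : ℕ, ¬ d ∣ i → PowerSeries.coeff (q ^ i) f = 0 :=
  F_linear_power_series_supported_on_qd_powers_general q d hcard ι f hlin
end

section
/- The power series ĥ = g ∘ h ∘ g^{−1} ∈ O⟦X⟧ has coefficients supported on exponents of the form q^{id}: there exist Ĥ_{id} ∈ O (i ≥ 0) such that ĥ = Σ_{i≥0} Ĥ_{id} X^{q^{id}}. Moreover the linear coefficient satisfies Ĥ₀ = ϖ. -/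
namespace PsAux

open PowerSeries Finset


open PowerSeries Finset

variable {R : Type*} [CommRing R]

theorem coeff_psComp (f g : PowerSeries R) (n : ℕ) :
    coeff n (psComp f g)
      = ∑ k ∈ range (n + 1), coeff k f * coeff n (g ^ k) := by
  simp [psComp]

theorem coeff_pow_eq_zero {g : PowerSeries R} (hg : constantCoeff g = 0)
    {n k : ℕ} (h : n < k) : coeff n (g ^ k) = 0 := by
  have hX : (X : PowerSeries R) ^ k ∣ g ^ k :=
    pow_dvd_pow_of_dvd (X_dvd_iff.mpr hg) k
  exact X_pow_dvd_iff.mp hX n h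

theorem coeff_psComp_of_le {g : PowerSeries R} (hg : constantCoeff g = 0)
    (f : PowerSeries R) {n N : ℕ} (hN : n + 1 ≤ N) :
    coeff n (psComp f g) = ∑ k ∈ range N, coeff k f * coeff n (g ^ k) := by
  rw [coeff_psComp]
  apply Finset.sum_subset (Finset.range_subset_range.mpr hN)
  intro k hk hk'
  simp only [Finset.mem_range] at hk hk'
  rw [coeff_pow_eq_zero hg (by omega), mul_zero]

theorem psComp_sum {ι : Type*} (s : Finset ι) (f : ι → PowerSeries R) (g : PowerSeries R) :
    psComp (∑ i ∈ s, f i) g = ∑ i ∈ s, psComp (f i) g := by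
  ext n
  simp only [coeff_psComp, map_sum, Finset.sum_mul]
  exact Finset.sum_comm

theorem psComp_C_mul (a : R) (f g : PowerSeries R) :
    psComp (C a * f) g = C a * psComp f g := by
  ext n
  simp only [coeff_psComp, coeff_C_mul, Finset.mul_sum, mul_assoc]

theorem psComp_one (g : PowerSeries R) : psComp (1 : PowerSeries R) g = 1 := by
  ext n
  simp [coeff_psComp, coeff_one]

theorem constantCoeff_psComp (f g : PowerSeries R) :
    constantCoeff (psComp f g) = constantCoeff f := by
  have := coeff_psComp f g 0
  simpa using this

theorem coeff_one_psComp (f g : PowerSeries R) :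
    coeff 1 (psComp f g) = coeff 1 f * coeff 1 g := by
  rw [coeff_psComp]
  rw [Finset.sum_range_succ, Finset.sum_range_one]
  simp

theorem psComp_X_right (f : PowerSeries R) : psComp f X = f := by
  ext n
  rw [coeff_psComp]
  simp only [coeff_X_pow]
  rw [Finset.sum_congr rfl (fun k _ => by rw [mul_ite, mul_one, mul_zero])]
  rw [Finset.sum_congr rfl (fun k _ => by rw [show ((if n = k then (coeff k) f else 0) : R) = if k = n then coeff k f else 0 from by split_ifs with h1 h2 <;> first | rfl | omega])]
  rw [Finset.sum_ite_eq' (range (n+1)) n (fun k => coeff k f)]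
  simp

theorem psComp_X_left {g : PowerSeries R} (hg : constantCoeff g = 0) :
    psComp X g = g := by
  ext n
  rw [coeff_psComp]
  rcases Nat.eq_zero_or_pos n with rfl | hn
  · simpa using hg.symm
  · have h1 : (1 : ℕ) ∈ range (n+1) := by simp; omega
    rw [Finset.sum_eq_single 1]
    · simp
    · intro k hk hk1
      rw [coeff_X, if_neg hk1, zero_mul]
    · intro h; exact absurd h1 h

theorem psComp_C_mul_X_left (a : R) (g : PowerSeries R) (hg : constantCoeff g = 0) :
    psComp (C a * X) g = C a * g := by
  rw [psComp_C_mul, psComp_X_left hg]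

theorem coeff_psComp_C_mul_X_right (f : PowerSeries R) (a : R) (n : ℕ) :
    coeff n (psComp f (C a * X)) = a ^ n * coeff n f := by
  rw [coeff_psComp]
  have hk : ∀ k, (C a * X) ^ k = C (a ^ k) * X ^ k := by
    intro k; rw [mul_pow, ← map_pow]
  rw [Finset.sum_congr rfl (fun k _ => by rw [hk k, coeff_C_mul, coeff_X_pow])]
  rw [Finset.sum_eq_single n]
  · simp [mul_comm]
  · intro k hk' hkn
    rw [if_neg (fun hh => hkn hh.symm), mul_zero, mul_zero]
  · intro h; exact absurd (by simp : n ∈ range (n+1)) h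



open PowerSeries Finset

variable {R : Type*} [CommRing R]



theorem coeff_eval₂ {g : PowerSeries R} (hg : constantCoeff g = 0)
    (P : Polynomial R) (n : ℕ) :
    coeff n (P.eval₂ (C) g) = ∑ i ∈ range (n + 1), P.coeff i * coeff n (g ^ i) := by
  set N := max (P.natDegree + 1) (n + 1) with hN
  have h1 : P.natDegree < N := by omega
  rw [Polynomial.eval₂_eq_sum_range' (C) h1 g, map_sum]
  have h2 : ∀ i ∈ range N, coeff n (C (P.coeff i) * g ^ i) = P.coeff i * coeff n (g ^ i) := by
    intro i _; rw [coeff_C_mul]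
  rw [Finset.sum_congr rfl h2]
  symm
  apply Finset.sum_subset (Finset.range_subset_range.mpr (by omega : n + 1 ≤ N))
  intro i hi hi'
  simp only [Finset.mem_range] at hi hi'
  rw [coeff_pow_eq_zero hg (by omega), mul_zero]

theorem coeff_eval₂_trunc {g : PowerSeries R} (hg : constantCoeff g = 0)
    (f : PowerSeries R) {n N : ℕ} (hn : n < N) :
    coeff n ((trunc N f).eval₂ (C) g) = coeff n (psComp f g) := by
  rw [coeff_eval₂ hg, coeff_psComp]
  apply Finset.sum_congr rfl
  intro i hi
  simp only [Finset.mem_range] at hi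
  rw [coeff_trunc, if_pos (by omega)]

theorem psComp_mul {g : PowerSeries R} (hg : constantCoeff g = 0)
    (f₁ f₂ : PowerSeries R) :
    psComp (f₁ * f₂) g = psComp f₁ g * psComp f₂ g := by
  ext n
  have key : ∀ i ≤ n, (trunc (n + 1) f₁ * trunc (n + 1) f₂).coeff i
      = coeff i (f₁ * f₂) := by
    intro i hi
    rw [Polynomial.coeff_mul, PowerSeries.coeff_mul]
    apply Finset.sum_congr rfl
    intro x hx
    rw [Finset.HasAntidiagonal.mem_antidiagonal] at hx
    rw [coeff_trunc, coeff_trunc, if_pos (by omega), if_pos (by omega)]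
  calc coeff n (psComp (f₁ * f₂) g)
      = ∑ i ∈ range (n + 1), (trunc (n+1) f₁ * trunc (n+1) f₂).coeff i * coeff n (g ^ i) := by
        rw [coeff_psComp]
        refine Finset.sum_congr rfl fun i hi => ?_
        rw [key i (by simp only [Finset.mem_range] at hi; omega)]
    _ = coeff n ((trunc (n+1) f₁ * trunc (n+1) f₂).eval₂ (C) g) := (coeff_eval₂ hg _ n).symm
    _ = coeff n (((trunc (n+1) f₁).eval₂ (C) g) * ((trunc (n+1) f₂).eval₂ (C) g)) := by
        rw [Polynomial.eval₂_mul]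
    _ = coeff n (psComp f₁ g * psComp f₂ g) := by
        rw [PowerSeries.coeff_mul, PowerSeries.coeff_mul]
        apply Finset.sum_congr rfl
        intro x hx
        rw [Finset.HasAntidiagonal.mem_antidiagonal] at hx
        rw [coeff_eval₂_trunc hg f₁ (by omega), coeff_eval₂_trunc hg f₂ (by omega)]


theorem psComp_pow {g : PowerSeries R} (hg : constantCoeff g = 0)
    (f : PowerSeries R) (k : ℕ) :
    psComp (f ^ k) g = (psComp f g) ^ k := by
  induction k with
  | zero => simpa using psComp_one g
  | succ k ih => rw [pow_succ, pow_succ, psComp_mul hg, ih]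

theorem psComp_assoc (f : PowerSeries R) {g h : PowerSeries R}
    (hg : constantCoeff g = 0) (hh : constantCoeff h = 0) :
    psComp (psComp f g) h = psComp f (psComp g h) := by
  ext n
  rw [coeff_psComp, coeff_psComp]
  have e1 : ∀ k ∈ range (n + 1),
      coeff k (psComp f g) * coeff n (h ^ k)
        = ∑ j ∈ range (n + 1), coeff j f * (coeff k (g ^ j) * coeff n (h ^ k)) := by
    intro k hk
    simp only [Finset.mem_range] at hk
    rw [coeff_psComp, Finset.sum_mul]
    rw [Finset.sum_congr rfl (fun j _ => (mul_assoc _ _ _))]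
    apply Finset.sum_subset (Finset.range_subset_range.mpr (by omega : k + 1 ≤ n + 1))
    intro j hj hj'
    simp only [Finset.mem_range] at hj hj'
    rw [coeff_pow_eq_zero hg (by omega), zero_mul, mul_zero]
  rw [Finset.sum_congr rfl e1, Finset.sum_comm]
  apply Finset.sum_congr rfl
  intro j _
  rw [← Finset.mul_sum]
  congr 1
  rw [← psComp_pow hh, coeff_psComp]


open PowerSeries Finset




theorem coeff_self_pow {g : PowerSeries R} (hg : constantCoeff g = 0) (n : ℕ) :
    coeff n (g ^ n) = (coeff 1 g) ^ n := by
  induction n with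
  | zero => simp
  | succ n ih =>
    rw [pow_succ, pow_succ, PowerSeries.coeff_mul]
    rw [Finset.sum_eq_single (n, 1)]
    · rw [ih]
    · intro x hx hne
      rw [Finset.HasAntidiagonal.mem_antidiagonal] at hx
      rcases lt_trichotomy x.1 n with h1 | h1 | h1
      · rw [coeff_pow_eq_zero hg h1, zero_mul]
      · exact absurd (Prod.ext h1 (by omega)) hne
      · have : x.2 = 0 := by omega
        rw [this, coeff_zero_eq_constantCoeff, hg, mul_zero]
    · intro hx
      exact absurd (by rw [Finset.HasAntidiagonal.mem_antidiagonal]) hx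

theorem frob_supp (p q m : ℕ) (hp : p.Prime) [CharP R p] (hq : q = p ^ m) (hq2 : 2 ≤ q)
    (f : PowerSeries R) (hf : ∀ n, (∀ k, n ≠ q ^ k) → coeff n f = 0)
    (j n : ℕ) (hn : ∀ k, n ≠ q ^ k) : coeff n (f ^ q ^ j) = 0 := by
  haveI := Fact.mk hp
  haveI : CharP (PowerSeries R) p :=
    charP_of_injective_ringHom (f := C)
      (fun a b hab => by simpa using congrArg constantCoeff hab) p
  haveI : ExpChar (PowerSeries R) p := ExpChar.prime hp
  set s : PowerSeries R := ∑ i ∈ range (n + 1), C (coeff (q ^ i) f) * X ^ q ^ i with hs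
  have hcoefs : ∀ b, coeff b s
      = ∑ i ∈ range (n + 1), (if b = q ^ i then coeff (q ^ i) f else 0) := by
    intro b
    rw [hs, map_sum]
    refine Finset.sum_congr rfl fun i _ => ?_
    rw [coeff_C_mul, coeff_X_pow, mul_ite, mul_one, mul_zero]
  have hts : ∀ b ≤ n, coeff b (f - s) = 0 := by
    intro b hb
    rw [map_sub, hcoefs]
    by_cases hbq : ∃ i, b = q ^ i
    · obtain ⟨i, rfl⟩ := hbq
      have hilt : i ∈ range (n + 1) := by
        have h1 : i < q ^ i := Nat.lt_pow_self (by omega)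
        simp only [Finset.mem_range]; omega
      rw [Finset.sum_eq_single i]
      · simp
      · intro i' _ hne
        rw [if_neg (fun hc => hne (Nat.pow_right_injective hq2 hc).symm)]
      · intro hc; exact absurd hilt hc
    · push_neg at hbq
      rw [hf b hbq]
      rw [Finset.sum_eq_zero (fun i _ => if_neg (hbq i))]
      simp
  have hXdvd : (X : PowerSeries R) ^ (n + 1) ∣ (f - s) :=
    X_pow_dvd_iff.mpr (fun b hb => hts b (by omega))
  have ht0 : coeff n ((f - s) ^ q ^ j) = 0 := by
    have : (X : PowerSeries R) ^ (n + 1) ∣ (f - s) ^ q ^ j :=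
      dvd_trans hXdvd (dvd_pow_self _ (by positivity))
    exact X_pow_dvd_iff.mp this n (by omega)
  have hqj : q ^ j = p ^ (m * j) := by rw [hq, ← pow_mul]
  have hsplit : f = s + (f - s) := by ring
  have hpowsplit : f ^ q ^ j = s ^ q ^ j + (f - s) ^ q ^ j := by
    conv_lhs => rw [hsplit]
    rw [hqj]
    exact add_pow_char_pow (R := PowerSeries R) (p := p) (n := m * j) (x := s) (y := f - s)
  rw [hpowsplit, map_add, ht0, add_zero]
  -- expand s ^ q ^ j
  have hspow : s ^ q ^ j = ∑ i ∈ range (n + 1), C ((coeff (q ^ i) f) ^ q ^ j) * X ^ (q ^ i * q ^ j) := by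
    rw [hs, hqj, sum_pow_char_pow]
    refine Finset.sum_congr rfl fun i _ => ?_
    rw [mul_pow, ← map_pow, ← pow_mul]
  rw [hspow, map_sum]
  refine Finset.sum_eq_zero fun i _ => ?_
  rw [coeff_C_mul, coeff_X_pow, ← pow_add]
  rw [if_neg (hn (i + j)), mul_zero]

theorem pow_sub_one_dvd_imp {q : ℕ} (hq : 2 ≤ q) {d : ℕ} (hd : 1 ≤ d) :
    ∀ k, q ^ d - 1 ∣ q ^ k - 1 → d ∣ k := by
  intro k
  induction k using Nat.strong_induction_on with
  | _ k ih =>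
    intro hdvd
    rcases lt_or_ge k d with hkd | hkd
    · rcases Nat.eq_zero_or_pos k with rfl | hk
      · exact dvd_zero d
      · exfalso
        have h1 : q ^ k - 1 < q ^ d - 1 := by
          have := Nat.pow_lt_pow_right (by omega : 1 < q) hkd
          have h2 : 1 ≤ q ^ k := Nat.one_le_pow _ _ (by omega)
          omega
        have h2 : 1 < q ^ k := by
          calc 1 < q := by omega
          _ ≤ q ^ k := Nat.le_self_pow (by omega) q
        have := Nat.le_of_dvd (by omega) hdvd
        omega
    · have e1 : q ^ (k - d) * q ^ d = q ^ k := by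
        rw [← pow_add]; congr 1; omega
      have e2 : q ^ (k - d) * (q ^ d - 1) = q ^ k - q ^ (k - d) := by
        rw [Nat.mul_sub, e1, mul_one]
      have h2 : q ^ d - 1 ∣ q ^ k - q ^ (k - d) := ⟨q ^ (k - d), by rw [← e2]; ring⟩
      have h3 : q ^ d - 1 ∣ q ^ (k - d) - 1 := by
        have hle : q ^ (k - d) ≤ q ^ k := Nat.pow_le_pow_right (by omega) (by omega)
        have h1 : 1 ≤ q ^ (k - d) := Nat.one_le_pow _ _ (by omega)
        have := Nat.dvd_sub hdvd h2
        have heq : q ^ k - 1 - (q ^ k - q ^ (k - d)) = q ^ (k - d) - 1 := by omega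
        rwa [heq] at this
      obtain ⟨c, hc⟩ := ih (k - d) (by omega) h3
      have h4 : d ∣ (k - d) + d := Nat.dvd_add ⟨c, hc⟩ dvd_rfl
      rwa [show k - d + d = k from by omega] at h4


end PsAux

namespace PsAux4

open PowerSeries


open PowerSeries

variable {K : Type*} [NormedField K] [IsUltrametricDist K]

theorem norm_sum_le_one {ι : Type*} {s : Finset ι} {f : ι → K}
    (h : ∀ i ∈ s, ‖f i‖ ≤ 1) : ‖∑ i ∈ s, f i‖ ≤ 1 :=
  IsUltrametricDist.norm_sum_le_of_forall_le_of_nonneg zero_le_one h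

theorem int_mul {f g : PowerSeries K} (hf : ∀ n, ‖coeff n f‖ ≤ 1)
    (hg : ∀ n, ‖coeff n g‖ ≤ 1) (n : ℕ) : ‖coeff n (f * g)‖ ≤ 1 := by
  rw [PowerSeries.coeff_mul]
  apply norm_sum_le_one
  intro i _
  rw [norm_mul]
  exact mul_le_one₀ (hf _) (norm_nonneg _) (hg _)

theorem int_pow {g : PowerSeries K} (hg : ∀ n, ‖coeff n g‖ ≤ 1) (k : ℕ) (n : ℕ) :
    ‖coeff n (g ^ k)‖ ≤ 1 := by
  induction k generalizing n with
  | zero =>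
    rw [pow_zero, PowerSeries.coeff_one]
    split_ifs <;> simp
  | succ k ih =>
    rw [pow_succ]
    exact int_mul (fun n => ih n) hg n


end PsAux4

/-- the conjugated series `ĥ = g ∘ h ∘ g⁻¹` has integral coefficients supported
on exponents of the form `q^{id}`, and its linear coefficient is `ϖ`. -/
theorem conjugated_series_supported_on_qd_powers
    {C : Type*} [NontriviallyNormedField C] [IsUltrametricDist C] [CompleteSpace C]
    [IsAlgClosed C]
    (p : ℕ) (hp : p.Prime) [CharP C p]
    (q : ℕ) (m : ℕ) (hm : 0 < m) (hq : q = p ^ m)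
    (d : ℕ) (hd : 1 ≤ d)
    (F : Subfield C) (hFfin : (F : Set C).Finite) (hFcard : hFfin.toFinset.card = q ^ d)
    (hFO : ∀ x ∈ F, ‖x‖ ≤ 1)
    (π : C) (hπ0 : π ≠ 0) (hπ1 : ‖π‖ < 1)
    (r : ℕ) (hr : 2 ≤ r)
    (H : ℕ → C) (hHint : ∀ i, ‖H i‖ ≤ 1) (hH0 : H 0 = π) (hHrd : ‖H (r * d)‖ = 1)
    (h : Polynomial C)
    (hh : h = ∑ i ∈ Finset.range (r * d + 1), Polynomial.C (H i) * Polynomial.X ^ q ^ i)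
    (Λ : C → PowerSeries C)
    (hΛ0 : Λ 0 = 0)
    (hΛconst : ∀ a ∈ F, PowerSeries.constantCoeff (Λ a) = 0)
    (hΛint : ∀ a ∈ F, ∀ n : ℕ, ‖PowerSeries.coeff n (Λ a)‖ ≤ 1)
    (hΛsupp : ∀ a ∈ F, ∀ n : ℕ, (∀ k : ℕ, n ≠ q ^ k) → PowerSeries.coeff n (Λ a) = 0)
    (hΛlin : ∀ a ∈ F, PowerSeries.coeff 1 (Λ a) = a)
    (hΛmul : ∀ a ∈ F, ∀ b ∈ F, psComp (Λ a) (Λ b) = Λ (a * b))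
    (hΛh : ∀ a ∈ F, psComp (Λ a) (h : PowerSeries C) = psComp (h : PowerSeries C) (Λ a))
    (σ : C) (hσF : σ ∈ F) (hσ0 : σ ≠ 0)
    (hσgen : ∀ x ∈ F, x ≠ 0 → ∃ k : ℕ, σ ^ k = x)
    (g : PowerSeries C)
    (hg : g = ∑ k ∈ Finset.Icc 1 (q ^ d - 1), PowerSeries.C (σ⁻¹ ^ k) * Λ (σ ^ k))
    (ginv : PowerSeries C)
    (hginv0 : PowerSeries.constantCoeff ginv = 0)
    (hginvl : psComp ginv g = PowerSeries.X)
    (hginvr : psComp g ginv = PowerSeries.X)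
    (hhat : PowerSeries C)
    (hhhat : hhat = psComp (psComp g (h : PowerSeries C)) ginv) :
    (∀ n : ℕ, (∀ i : ℕ, n ≠ q ^ (i * d)) → PowerSeries.coeff n hhat = 0) ∧
    (∀ n : ℕ, ‖PowerSeries.coeff n hhat‖ ≤ 1) ∧
    PowerSeries.coeff 1 hhat = π := by
  classical
  have hp2 : 2 ≤ p := hp.two_le
  have hq2 : 2 ≤ q := by
    rw [hq]
    calc 2 ≤ p := hp2
    _ ≤ p ^ m := Nat.le_self_pow (by omega) p
  have hQ2 : 2 ≤ q ^ d := le_trans hq2 (Nat.le_self_pow (by omega) q)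
  -- finite field facts
  haveI : Fintype F := hFfin.fintype
  have hcardF : Fintype.card F = q ^ d := by
    rw [← hFcard]; exact (Set.Finite.card_toFinset hFfin).symm
  set σ' : F := ⟨σ, hσF⟩ with hσ'def
  have hσ'0 : σ' ≠ 0 := by
    intro hc
    exact hσ0 (by simpa [hσ'def] using congrArg Subtype.val hc)
  have hσQ1' : σ' ^ (q ^ d - 1) = 1 := by
    have := FiniteField.pow_card_sub_one_eq_one σ' hσ'0
    rwa [hcardF] at this
  have hσQ1 : σ ^ (q ^ d - 1) = 1 := by
    have := congrArg Subtype.val hσQ1'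
    push_cast at this
    simpa [hσ'def] using this
  have horddvd : orderOf σ' ∣ q ^ d - 1 := orderOf_dvd_of_pow_eq_one hσQ1'
  have hordpos : 0 < orderOf σ' := by
    rcases Nat.eq_zero_or_pos (orderOf σ') with h0 | hh0
    · rw [h0] at horddvd
      have := Nat.eq_zero_of_zero_dvd horddvd
      omega
    · exact hh0
  have hge : q ^ d - 1 ≤ orderOf σ' := by
    have hsub : (Finset.univ.erase (0 : F)) ⊆
        Finset.image (fun i => σ' ^ i) (Finset.range (orderOf σ')) := by
      intro x hx
      have hxne : x ≠ 0 := Finset.ne_of_mem_erase hx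
      have hxne' : (x : C) ≠ 0 := fun hc => hxne (Subtype.ext hc)
      obtain ⟨k, hk⟩ := hσgen x x.2 hxne'
      have hk' : σ' ^ k = x := Subtype.ext (by push_cast [hσ'def]; exact hk)
      refine Finset.mem_image.mpr ⟨k % orderOf σ', Finset.mem_range.mpr (Nat.mod_lt _ hordpos), ?_⟩
      rw [pow_mod_orderOf, hk']
    calc q ^ d - 1 = (Finset.univ.erase (0 : F)).card := by
          rw [Finset.card_erase_of_mem (Finset.mem_univ _), Finset.card_univ, hcardF]
      _ ≤ _ := Finset.card_le_card hsub
      _ ≤ (Finset.range (orderOf σ')).card := Finset.card_image_le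
      _ = orderOf σ' := Finset.card_range _
  have horder : orderOf σ' = q ^ d - 1 :=
    le_antisymm (Nat.le_of_dvd (by omega) horddvd) hge
  have key_ne : ∀ k : ℕ, ¬ d ∣ k → σ ^ q ^ k ≠ σ := by
    intro k hdk hc
    have hc' : σ' ^ q ^ k = σ' := Subtype.ext (by push_cast [hσ'def]; exact hc)
    have h1 : 1 ≤ q ^ k := Nat.one_le_pow _ _ (by omega)
    have h2 : σ' ^ (q ^ k - 1) = 1 := by
      have h3 : σ' ^ (q ^ k - 1) * σ' = 1 * σ' := by
        rw [one_mul, ← pow_succ, show q ^ k - 1 + 1 = q ^ k from by omega]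
        exact hc'
      exact mul_right_cancel₀ hσ'0 h3
    have h4 : q ^ d - 1 ∣ q ^ k - 1 := horder ▸ orderOf_dvd_of_pow_eq_one h2
    exact hdk (PsAux.pow_sub_one_dvd_imp hq2 hd k h4)
  -- facts about g
  have hσmem : ∀ k : ℕ, σ ^ k ∈ F := fun k => pow_mem hσF k
  have hgco : ∀ n, PowerSeries.coeff n g
      = ∑ k ∈ Finset.Icc 1 (q ^ d - 1), σ⁻¹ ^ k * PowerSeries.coeff n (Λ (σ ^ k)) := by
    intro n
    rw [hg, map_sum]
    exact Finset.sum_congr rfl fun k _ => by rw [PowerSeries.coeff_C_mul]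
  have hg0 : PowerSeries.constantCoeff g = 0 := by
    rw [← PowerSeries.coeff_zero_eq_constantCoeff_apply, hgco]
    refine Finset.sum_eq_zero fun k _ => ?_
    have hc := hΛconst _ (hσmem k)
    rw [← PowerSeries.coeff_zero_eq_constantCoeff_apply] at hc
    rw [hc, mul_zero]
  have hσnorm : ‖σ‖ = 1 := by
    have h1 : ‖σ‖ ^ (q ^ d - 1) = 1 := by rw [← norm_pow, hσQ1, norm_one]
    rcases lt_trichotomy ‖σ‖ 1 with hlt | heq | hgt
    · exfalso
      have := pow_lt_one₀ (norm_nonneg σ) hlt (by omega : q ^ d - 1 ≠ 0)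
      linarith
    · exact heq
    · exfalso
      have := one_lt_pow₀ hgt (by omega : q ^ d - 1 ≠ 0)
      linarith
  have hσinvnorm : ‖σ⁻¹‖ = 1 := by rw [norm_inv, hσnorm]; norm_num
  have hgint : ∀ n, ‖PowerSeries.coeff n g‖ ≤ 1 := by
    intro n
    rw [hgco]
    apply PsAux4.norm_sum_le_one
    intro k _
    rw [norm_mul, norm_pow, hσinvnorm, one_pow, one_mul]
    exact hΛint _ (hσmem k) n
  have hgsupp : ∀ n, (∀ k, n ≠ q ^ k) → PowerSeries.coeff n g = 0 := by
    intro n hn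
    rw [hgco]
    exact Finset.sum_eq_zero fun k _ => by rw [hΛsupp _ (hσmem k) n hn, mul_zero]
  have hQC : ((q ^ d : ℕ) : C) = 0 := by
    rw [hq, ← pow_mul, Nat.cast_pow, CharP.cast_eq_zero C p, zero_pow (Nat.mul_ne_zero (by omega) (by omega))]
  have hg1 : PowerSeries.coeff 1 g = -1 := by
    rw [hgco]
    have e : ∀ k ∈ Finset.Icc 1 (q ^ d - 1),
        σ⁻¹ ^ k * PowerSeries.coeff 1 (Λ (σ ^ k)) = 1 := by
      intro k _
      rw [hΛlin _ (hσmem k), ← mul_pow, inv_mul_cancel₀ hσ0, one_pow]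
    rw [Finset.sum_congr rfl e, Finset.sum_const, Nat.card_Icc]
    rw [nsmul_eq_mul, mul_one]
    rw [show q ^ d - 1 + 1 - 1 = q ^ d - 1 from rfl]
    rw [Nat.cast_sub (by omega : 1 ≤ q ^ d), hQC]
    norm_num
  -- facts about h
  have hhcoeff : ∀ n, PowerSeries.coeff n (h : PowerSeries C)
      = ∑ i ∈ Finset.range (r * d + 1), (if n = q ^ i then H i else 0) := by
    intro n
    rw [Polynomial.coeff_coe, hh, Polynomial.finset_sum_coeff]
    exact Finset.sum_congr rfl fun i _ => by
      rw [Polynomial.coeff_C_mul, Polynomial.coeff_X_pow, mul_ite, mul_one, mul_zero]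
  have hh0' : PowerSeries.constantCoeff (h : PowerSeries C) = 0 := by
    rw [← PowerSeries.coeff_zero_eq_constantCoeff_apply, hhcoeff]
    refine Finset.sum_eq_zero fun i _ => if_neg ?_
    have := Nat.one_le_pow i q (by omega)
    omega
  have hhsupp : ∀ n, (∀ k, n ≠ q ^ k) → PowerSeries.coeff n (h : PowerSeries C) = 0 :=
    fun n hn => by rw [hhcoeff]; exact Finset.sum_eq_zero fun i _ => if_neg (hn i)
  have hhint : ∀ n, ‖PowerSeries.coeff n (h : PowerSeries C)‖ ≤ 1 := by
    intro n
    rw [hhcoeff]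
    apply PsAux4.norm_sum_le_one
    intro i _
    split_ifs
    · exact hHint i
    · simp
  have hh1 : PowerSeries.coeff 1 (h : PowerSeries C) = π := by
    rw [hhcoeff, Finset.sum_eq_single 0]
    · rw [if_pos (by simp), hH0]
    · intro i _ hi
      refine if_neg ?_
      have : q ≤ q ^ i := Nat.le_self_pow hi q
      omega
    · intro hc
      exact absurd (Finset.mem_range.mpr (by omega)) hc
  -- frobenius support for g
  have frobg : ∀ (f : PowerSeries C), (∀ n, (∀ k, n ≠ q ^ k) → PowerSeries.coeff n f = 0) →
      ∀ j n, (∀ k, n ≠ q ^ k) → PowerSeries.coeff n (f ^ q ^ j) = 0 :=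
    fun f hf j n hn => PsAux.frob_supp p q m hp hq hq2 f hf j n hn
  -- ginv facts by strong induction
  have ginv_main : ∀ n : ℕ, ‖PowerSeries.coeff n ginv‖ ≤ 1 ∧
      ((∀ k, n ≠ q ^ k) → PowerSeries.coeff n ginv = 0) := by
    intro n
    induction n using Nat.strong_induction_on with
    | _ n ih =>
    rcases Nat.eq_zero_or_pos n with rfl | hn
    · rw [PowerSeries.coeff_zero_eq_constantCoeff_apply, hginv0]
      exact ⟨by simp, fun _ => rfl⟩
    · have heq : PowerSeries.coeff n PowerSeries.X
          = (∑ k ∈ Finset.range n, PowerSeries.coeff k ginv * PowerSeries.coeff n (g ^ k))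
            + PowerSeries.coeff n ginv * (-1 : C) ^ n := by
        rw [← hginvl, PsAux.coeff_psComp, Finset.sum_range_succ, PsAux.coeff_self_pow hg0, hg1]
      have hsub : PowerSeries.coeff n ginv * (-1 : C) ^ n
          = PowerSeries.coeff n PowerSeries.X
            - ∑ k ∈ Finset.range n, PowerSeries.coeff k ginv * PowerSeries.coeff n (g ^ k) :=
        eq_sub_of_add_eq' heq.symm
      have hsq : (-1 : C) ^ n * (-1 : C) ^ n = 1 := by
        rw [← pow_add]
        exact Even.neg_one_pow ⟨n, by omega⟩
      have hkey : PowerSeries.coeff n ginv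
          = (PowerSeries.coeff n PowerSeries.X
              - ∑ k ∈ Finset.range n, PowerSeries.coeff k ginv * PowerSeries.coeff n (g ^ k))
            * (-1 : C) ^ n := by
        calc PowerSeries.coeff n ginv
            = PowerSeries.coeff n ginv * ((-1 : C) ^ n * (-1 : C) ^ n) := by rw [hsq, mul_one]
          _ = (PowerSeries.coeff n ginv * (-1 : C) ^ n) * (-1 : C) ^ n := by ring
          _ = _ := by rw [hsub]
      constructor
      · rw [hkey, norm_mul]
        have hn1 : ‖(-1 : C) ^ n‖ = 1 := by rw [norm_pow, norm_neg, norm_one, one_pow]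
        rw [hn1, mul_one]
        have hXn : ‖PowerSeries.coeff n (PowerSeries.X : PowerSeries C)‖ ≤ 1 := by
          rw [PowerSeries.coeff_X]
          split_ifs <;> simp
        have hSn : ‖∑ k ∈ Finset.range n,
            PowerSeries.coeff k ginv * PowerSeries.coeff n (g ^ k)‖ ≤ 1 := by
          apply PsAux4.norm_sum_le_one
          intro k hk
          rw [norm_mul]
          exact mul_le_one₀ ((ih k (Finset.mem_range.mp hk)).1) (norm_nonneg _)
            (PsAux4.int_pow hgint k n)
        rw [sub_eq_add_neg]
        refine le_trans (IsUltrametricDist.norm_add_le_max _ _) ?_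
        rw [norm_neg]
        exact max_le hXn hSn
      · intro hnq
        have hXn : PowerSeries.coeff n (PowerSeries.X : PowerSeries C) = 0 := by
          rw [PowerSeries.coeff_X, if_neg]
          intro hc
          exact hnq 0 (by rw [hc, pow_zero])
        have hSn : ∑ k ∈ Finset.range n,
            PowerSeries.coeff k ginv * PowerSeries.coeff n (g ^ k) = 0 := by
          apply Finset.sum_eq_zero
          intro k hk
          by_cases hkq : ∃ j, k = q ^ j
          · obtain ⟨j, rfl⟩ := hkq
            rw [frobg g hgsupp j n hnq, mul_zero]
          · push_neg at hkq
            rw [(ih k (Finset.mem_range.mp hk)).2 hkq, zero_mul]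
        rw [hkey, hXn, hSn, sub_zero, zero_mul]
  -- composition closure lemmas
  have int_comp : ∀ f₁ f₂ : PowerSeries C, (∀ n, ‖PowerSeries.coeff n f₁‖ ≤ 1) →
      (∀ n, ‖PowerSeries.coeff n f₂‖ ≤ 1) → ∀ n, ‖PowerSeries.coeff n (psComp f₁ f₂)‖ ≤ 1 := by
    intro f₁ f₂ h₁ h₂ n
    rw [PsAux.coeff_psComp]
    apply PsAux4.norm_sum_le_one
    intro k _
    rw [norm_mul]
    exact mul_le_one₀ (h₁ k) (norm_nonneg _) (PsAux4.int_pow h₂ k n)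
  have supp_comp : ∀ f₁ f₂ : PowerSeries C,
      (∀ n, (∀ k, n ≠ q ^ k) → PowerSeries.coeff n f₁ = 0) →
      (∀ n, (∀ k, n ≠ q ^ k) → PowerSeries.coeff n f₂ = 0) →
      ∀ n, (∀ k, n ≠ q ^ k) → PowerSeries.coeff n (psComp f₁ f₂) = 0 := by
    intro f₁ f₂ h₁ h₂ n hn
    rw [PsAux.coeff_psComp]
    apply Finset.sum_eq_zero
    intro k _
    by_cases hkq : ∃ j, k = q ^ j
    · obtain ⟨j, rfl⟩ := hkq
      rw [frobg f₂ h₂ j n hn, mul_zero]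
    · push_neg at hkq
      rw [h₁ k hkq, zero_mul]
  -- claim 1 : g ∘ Λ σ = σ • g
  have hΛσ0 : PowerSeries.constantCoeff (Λ σ) = 0 := hΛconst σ hσF
  have hCX0 : PowerSeries.constantCoeff (PowerSeries.C σ * PowerSeries.X) = 0 := by simp
  have claim1 : psComp g (Λ σ) = PowerSeries.C σ * g := by
    set N := q ^ d - 1 with hNdef
    have hN1 : 1 ≤ N := by omega
    set G : ℕ → PowerSeries C := fun k => PowerSeries.C (σ⁻¹ ^ k) * Λ (σ ^ k) with hGdef
    have hgG : g = ∑ k ∈ Finset.Icc 1 N, G k := hg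
    have e0 : psComp g (Λ σ) = ∑ k ∈ Finset.Icc 1 N, PowerSeries.C σ * G (k + 1) := by
      rw [hgG, PsAux.psComp_sum]
      refine Finset.sum_congr rfl fun k _ => ?_
      rw [hGdef]
      simp only []
      rw [PsAux.psComp_C_mul, hΛmul _ (hσmem k) _ hσF, ← pow_succ, ← mul_assoc, ← map_mul]
      congr 2
      rw [pow_succ, mul_comm σ _, mul_assoc, inv_mul_cancel₀ hσ0, mul_one]
    have hpowQ : σ ^ (N + 1) = σ ^ 1 := by
      rw [pow_succ, pow_one, hNdef, hσQ1, one_mul]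
    have hpowQ' : σ⁻¹ ^ (N + 1) = σ⁻¹ ^ 1 := by
      rw [inv_pow, inv_pow, hpowQ]
    have hGN1 : G (N + 1) = G 1 := by
      rw [hGdef]
      simp only []
      rw [hpowQ, hpowQ']
    have reindex : ∑ k ∈ Finset.Icc 1 N, G (k + 1) = ∑ k ∈ Finset.Icc 2 (N + 1), G k := by
      rw [show (2 : ℕ) = 1 + 1 from rfl, ← Finset.map_add_right_Icc 1 N 1, Finset.sum_map]
      rfl
    have i1 : ∑ k ∈ Finset.Icc 1 (N + 1), G k = (∑ k ∈ Finset.Icc 1 N, G k) + G (N + 1) :=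
      Finset.sum_Icc_succ_top (by omega) G
    have i2 : ∑ k ∈ Finset.Icc 1 (N + 1), G k = G 1 + ∑ k ∈ Finset.Ioc 1 (N + 1), G k := by
      rw [← Finset.sum_cons, ← Finset.Icc_eq_cons_Ioc (by omega)]
      simp
    have i3 : Finset.Icc 2 (N + 1) = Finset.Ioc 1 (N + 1) := Finset.Icc_add_one_left_eq_Ioc 1 (N + 1)
    have step2 : ∑ k ∈ Finset.Icc 2 (N + 1), G k = ∑ k ∈ Finset.Icc 1 N, G k := by
      rw [i3]
      have := i2.symm.trans i1
      rw [hGN1] at this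
      rw [add_comm (∑ k ∈ Finset.Icc 1 N, G k) (G 1)] at this
      exact add_left_cancel this
    rw [e0, ← Finset.mul_sum, reindex, step2, ← hgG]
  -- claim 2 : Λ σ ∘ ginv = ginv ∘ (σ X)
  have claim2 : psComp (Λ σ) ginv = psComp ginv (PowerSeries.C σ * PowerSeries.X) := by
    have e1 : psComp ginv (psComp g (Λ σ)) = Λ σ := by
      rw [← PsAux.psComp_assoc ginv hg0 hΛσ0, hginvl, PsAux.psComp_X_left hΛσ0]
    have e2 : psComp (psComp ginv (PowerSeries.C σ * PowerSeries.X)) g = Λ σ := by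
      rw [PsAux.psComp_assoc ginv hCX0 hg0, PsAux.psComp_C_mul_X_left _ _ hg0, ← claim1]
      exact e1
    calc psComp (Λ σ) ginv
        = psComp (psComp (psComp ginv (PowerSeries.C σ * PowerSeries.X)) g) ginv := by rw [e2]
      _ = psComp (psComp ginv (PowerSeries.C σ * PowerSeries.X)) (psComp g ginv) :=
          PsAux.psComp_assoc _ hg0 hginv0
      _ = psComp ginv (PowerSeries.C σ * PowerSeries.X) := by
          rw [hginvr, PsAux.psComp_X_right]
  -- the scaling identity
  have hgh0 : PowerSeries.constantCoeff (psComp g (h : PowerSeries C)) = 0 := by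
    rw [PsAux.constantCoeff_psComp]
    exact hg0
  have scaling : psComp hhat (PowerSeries.C σ * PowerSeries.X) = PowerSeries.C σ * hhat := by
    rw [hhhat]
    calc psComp (psComp (psComp g (h : PowerSeries C)) ginv) (PowerSeries.C σ * PowerSeries.X)
        = psComp (psComp g (h : PowerSeries C)) (psComp ginv (PowerSeries.C σ * PowerSeries.X)) :=
          PsAux.psComp_assoc _ hginv0 hCX0
      _ = psComp (psComp g (h : PowerSeries C)) (psComp (Λ σ) ginv) := by rw [claim2]
      _ = psComp (psComp (psComp g (h : PowerSeries C)) (Λ σ)) ginv :=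
          (PsAux.psComp_assoc _ hΛσ0 hginv0).symm
      _ = psComp (psComp g (psComp (h : PowerSeries C) (Λ σ))) ginv := by
          rw [PsAux.psComp_assoc g hh0' hΛσ0]
      _ = psComp (psComp g (psComp (Λ σ) (h : PowerSeries C))) ginv := by
          rw [hΛh σ hσF]
      _ = psComp (psComp (psComp g (Λ σ)) (h : PowerSeries C)) ginv := by
          rw [PsAux.psComp_assoc g hΛσ0 hh0']
      _ = psComp (psComp (PowerSeries.C σ * g) (h : PowerSeries C)) ginv := by rw [claim1]
      _ = PowerSeries.C σ * psComp (psComp g (h : PowerSeries C)) ginv := by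
          rw [PsAux.psComp_C_mul, PsAux.psComp_C_mul]
  have coeffscale : ∀ n, σ ^ n * PowerSeries.coeff n hhat = σ * PowerSeries.coeff n hhat := by
    intro n
    have := congrArg (PowerSeries.coeff n) scaling
    rwa [PsAux.coeff_psComp_C_mul_X_right, PowerSeries.coeff_C_mul] at this
  -- assemble
  have hhat_supp_q : ∀ n, (∀ k, n ≠ q ^ k) → PowerSeries.coeff n hhat = 0 := by
    intro n hn
    rw [hhhat]
    exact supp_comp _ _ (supp_comp _ _ hgsupp hhsupp) (fun n hn => (ginv_main n).2 hn) n hn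
  refine ⟨?_, ?_, ?_⟩
  · intro n hn
    by_cases hq' : ∃ k, n = q ^ k
    · obtain ⟨k, rfl⟩ := hq'
      have hdk : ¬ d ∣ k := by
        rintro ⟨i, hi⟩
        exact hn i (by rw [hi, mul_comm])
      have hne := key_ne k hdk
      have h0 : (σ ^ q ^ k - σ) * PowerSeries.coeff (q ^ k) hhat = 0 := by
        rw [sub_mul, coeffscale (q ^ k), sub_self]
      rcases mul_eq_zero.mp h0 with h' | h'
      · exact absurd (sub_eq_zero.mp h') hne
      · exact h'
    · push_neg at hq'
      exact hhat_supp_q n hq'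
  · intro n
    rw [hhhat]
    exact int_comp _ _ (int_comp _ _ hgint hhint) (fun n => (ginv_main n).1) n
  · have hgi : PowerSeries.coeff 1 ginv * PowerSeries.coeff 1 g = 1 := by
      have := congrArg (PowerSeries.coeff 1) hginvl
      rwa [PsAux.coeff_one_psComp, PowerSeries.coeff_X, if_pos rfl] at this
    rw [hhhat, PsAux.coeff_one_psComp, PsAux.coeff_one_psComp, hh1]
    calc PowerSeries.coeff 1 g * π * PowerSeries.coeff 1 ginv
        = (PowerSeries.coeff 1 ginv * PowerSeries.coeff 1 g) * π := by ring
      _ = π := by rw [hgi, one_mul]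
end

section
/- Let ĥ = Σ_{i≥0} Ĥ_{id} X^{Q^i} ∈ O⟦X⟧ with Ĥ₀ = ϖ. Suppose Ĥ_d ≠ 0, v(Ĥ_d) < v(ϖ), and the point (Q, v(Ĥ_d)) is a vertex of the Newton polygon of ĥ. Let α ∈ C be a zero of ĥ (i.e. the convergent sum ĥ(α) equals 0) with v(α) = (v(ϖ) − v(Ĥ_d))/(Q − 1). Then there exists m ∈ C with v(m) > 0 such that ∏_{λ ∈ F}(X − λα) = X^Q + (ϖ/((1+m)Ĥ_d))·X in C[X]; equivalently α^{Q−1} = −ϖ/((1+m)Ĥ_d), i.e. v(Ĥ_d·α^{Q−1} + ϖ) > v(ϖ). -/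
/-- `(n, v(c n))` is a vertex of the Newton polygon of a series with coefficients `c`:
`c n ≠ 0` and there is a supporting line, of slope `s` (here `t = e^{-s}`), passing through
`(n, v(c n))` and lying strictly below `(j, v(c j))` for every `j ≠ n` with `c j ≠ 0`. -/
def IsNewtonVertex {C : Type*} [NormedField C] (c : ℕ → C) (n : ℕ) : Prop :=
  c n ≠ 0 ∧ ∃ t : ℝ, 0 < t ∧ ∀ j ≠ n, ‖c j‖ * t ^ n < ‖c n‖ * t ^ j

/-- Evaluation of a power series at a point (its sum, when convergent). -/
noncomputable def psEval {C : Type*} [NormedField C] (f : PowerSeries C) (x : C) : C :=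
  ∑' n : ℕ, PowerSeries.coeff n f * x ^ n

open IsUltrametricDist in
lemma myUltraTsumLe {C : Type*} [NormedAddCommGroup C] [IsUltrametricDist C] {f : ℕ → C}
    (hf : Summable f) {r : ℝ} (hr : 0 ≤ r) (h : ∀ i, ‖f i‖ ≤ r) : ‖∑' i, f i‖ ≤ r := by
  refine le_of_tendsto' ((continuous_norm.tendsto _).comp hf.hasSum) ?_
  intro s
  exact norm_sum_le_of_forall_le_of_nonneg hr (fun i _ => h i)

open Polynomial in
lemma myProdLemma {C : Type*} [Field C] [IsAlgClosed C] (S : Finset C) (Q : ℕ) (hQ2 : 2 ≤ Q)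
    (a : C) (hcard : S.card = Q) (hroot : ∀ x ∈ S, x ^ Q - a * x = 0) :
    ∏ x ∈ S, (X - Polynomial.C x) = X ^ Q - Polynomial.C a * X := by
  set f : C[X] := X ^ Q - Polynomial.C a * X with hf
  have hdlt : degree (Polynomial.C a * X) < (Q : WithBot ℕ) := by
    refine (degree_C_mul_X_le a).trans_lt ?_
    exact_mod_cast (by omega : (1:ℕ) < Q)
  have hmonic : f.Monic := monic_X_pow_sub (by simpa using hdlt)
  have hdeg : f.degree = Q := by
    rw [hf, degree_sub_eq_left_of_degree_lt (by simpa [degree_X_pow] using hdlt)]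
    exact degree_X_pow Q
  have hnd : f.natDegree = Q := natDegree_eq_of_degree_eq_some hdeg
  have hf0 : f ≠ 0 := hmonic.ne_zero
  have hcardroots : f.roots.card = Q := by
    rw [← hnd]
    exact (splits_iff_card_roots).mp (IsAlgClosed.splits f)
  have hle : S.val ≤ f.roots := by
    rw [Multiset.le_iff_subset S.nodup]
    intro x hx
    rw [mem_roots hf0]
    have := hroot x hx
    simp [hf, IsRoot, this]
  have heq : f.roots = S.val :=
    (Multiset.eq_of_le_of_card_le hle (by rw [hcardroots, ← hcard]; rfl)).symm
  calc ∏ x ∈ S, (X - Polynomial.C x) = (S.val.map fun x => X - Polynomial.C x).prod := rfl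
    _ = (f.roots.map fun x => X - Polynomial.C x).prod := by rw [heq]
    _ = f := ((IsAlgClosed.splits f).eq_prod_roots_of_monic hmonic).symm

/-- let `ĥ = Σ_{i≥0} Ĥ_{id} X^{Q^i}` with `Ĥ₀ = ϖ`, `Ĥ_d ≠ 0`,
`v(Ĥ_d) < v(ϖ)`, and `(Q, v(Ĥ_d))` a vertex of the Newton polygon of `ĥ`.  If `α` is a zero
of `ĥ` with `v(α) = (v(ϖ) - v(Ĥ_d))/(Q - 1)`, then there is `m` with `v(m) > 0` such that
`∏_{λ ∈ F}(X - λα) = X^Q + (ϖ/((1+m)Ĥ_d))·X`; equivalently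
`α^{Q-1} = -ϖ/((1+m)Ĥ_d)`, i.e. `v(Ĥ_d·α^{Q-1} + ϖ) > v(ϖ)`. -/
theorem minimal_root_satisfies_canonical_equation
    {C : Type*} [NontriviallyNormedField C] [IsUltrametricDist C] [CompleteSpace C]
    [IsAlgClosed C]
    (p : ℕ) (hp : p.Prime) [CharP C p]
    (q : ℕ) (m : ℕ) (hm : 0 < m) (hq : q = p ^ m)
    (d : ℕ) (hd : 1 ≤ d)
    (Q : ℕ) (hQ : Q = q ^ d)
    (F : Subfield C) (hFfin : (F : Set C).Finite) (hFcard : hFfin.toFinset.card = Q)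
    (hFO : ∀ x ∈ F, ‖x‖ ≤ 1)
    (π : C) (hπ0 : π ≠ 0) (hπ1 : ‖π‖ < 1)
    (Hhat : ℕ → C) (hHhatint : ∀ i, ‖Hhat i‖ ≤ 1) (hHhat0 : Hhat 0 = π)
    (hhat : PowerSeries C)
    (hcoeff : ∀ i : ℕ, PowerSeries.coeff (Q ^ i) hhat = Hhat i)
    (hsupp : ∀ n : ℕ, (∀ i : ℕ, n ≠ Q ^ i) → PowerSeries.coeff n hhat = 0)
    (hHd0 : Hhat 1 ≠ 0)
    (hHdπ : ‖π‖ < ‖Hhat 1‖)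
    (hvertex : IsNewtonVertex (fun j => PowerSeries.coeff j hhat) Q)
    (α : C) (hzero : psEval hhat α = 0)
    (hα : ‖α‖ ^ (Q - 1) * ‖Hhat 1‖ = ‖π‖) :
    ∃ m' : C, ‖m'‖ < 1 ∧
      (∏ x ∈ hFfin.toFinset, (Polynomial.X - Polynomial.C (x * α))) =
        Polynomial.X ^ Q + Polynomial.C (π / ((1 + m') * Hhat 1)) * Polynomial.X ∧
      α ^ (Q - 1) = -π / ((1 + m') * Hhat 1) ∧
      ‖Hhat 1 * α ^ (Q - 1) + π‖ < ‖π‖ := by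
  have hq2 : 2 ≤ q := by
    subst hq
    calc 2 = 2 ^ 1 := rfl
      _ ≤ p ^ m := Nat.pow_le_pow_left hp.two_le m |>.trans' (Nat.pow_le_pow_right (by norm_num) hm)
  have hQ2 : 2 ≤ Q := by
    subst hQ
    calc 2 ≤ q := hq2
      _ = q ^ 1 := (pow_one q).symm
      _ ≤ q ^ d := Nat.pow_le_pow_right (by omega) hd
  have hπpos : 0 < ‖π‖ := norm_pos_iff.mpr hπ0
  have hα0 : α ≠ 0 := by
    rintro rfl
    rw [norm_zero, zero_pow (by omega : Q - 1 ≠ 0), zero_mul] at hα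
    exact hπpos.ne hα
  have hαpos : 0 < ‖α‖ := norm_pos_iff.mpr hα0
  have hH1pos : 0 < ‖Hhat 1‖ := norm_pos_iff.mpr hHd0
  have hαQ1lt : ‖α‖ ^ (Q - 1) < 1 := by
    by_contra h
    push_neg at h
    have : ‖Hhat 1‖ ≤ ‖α‖ ^ (Q - 1) * ‖Hhat 1‖ := le_mul_of_one_le_left hH1pos.le h
    rw [hα] at this
    exact absurd hHdπ (not_lt.mpr this)
  have hα1 : ‖α‖ < 1 := by
    by_contra h
    push_neg at h
    exact absurd (one_le_pow₀ h (n := Q - 1)) (not_le.mpr hαQ1lt)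
  -- the indexed series
  set e : ℕ → C := fun i => Hhat i * α ^ (Q ^ i) with he
  have hsum : Summable e := by
    refine Summable.of_norm_bounded (summable_geometric_of_lt_one hαpos.le hα1) ?_
    intro i
    rw [he]
    calc ‖Hhat i * α ^ (Q ^ i)‖ = ‖Hhat i‖ * ‖α‖ ^ (Q ^ i) := by rw [norm_mul, norm_pow]
      _ ≤ 1 * ‖α‖ ^ (Q ^ i) := by
          exact mul_le_mul_of_nonneg_right (hHhatint i) (by positivity)
      _ = ‖α‖ ^ (Q ^ i) := one_mul _
      _ ≤ ‖α‖ ^ i := pow_le_pow_of_le_one hαpos.le hα1.le (Nat.le_of_lt (Nat.lt_pow_self (n := i) (by omega : 1 < Q)))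
  -- reindexing
  have hinj : Function.Injective (fun i : ℕ => Q ^ i) := fun a b hab =>
    Nat.pow_right_injective hQ2 hab
  have hreindex : ∑' i : ℕ, e i = psEval hhat α := by
    rw [psEval]
    refine Eq.trans ?_ (hinj.tsum_eq ?_)
    · exact tsum_congr fun i => by rw [he]; simp [hcoeff i]
    · intro n hn
      simp only [Function.mem_support, ne_eq] at hn
      by_contra hmem
      refine hn ?_
      rw [hsupp n ?_, zero_mul]
      intro i hni
      exact hmem ⟨i, hni.symm⟩
  have hzero' : ∑' i : ℕ, e i = 0 := by rw [hreindex, hzero]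
  -- split off two terms
  set T : C := ∑' i : ℕ, e (i + 2) with hT
  have hsum1 : Summable (fun i => e (i + 1)) := (summable_nat_add_iff 1).mpr hsum
  have hsum2 : Summable (fun i => e (i + 2)) := (summable_nat_add_iff 2).mpr hsum
  have hsplit : π * α + (Hhat 1 * α ^ Q + T) = 0 := by
    have h0 : ∑' i : ℕ, e i = e 0 + ∑' i, e (i + 1) := Summable.tsum_eq_zero_add hsum
    have h1 : ∑' i : ℕ, e (i + 1) = e 1 + ∑' i, e (i + 2) := Summable.tsum_eq_zero_add hsum1
    have he0 : e 0 = π * α := by rw [he]; simp [hHhat0]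
    have he1 : e 1 = Hhat 1 * α ^ Q := by rw [he]; simp
    rw [← he0, ← he1, hT, ← h1, ← h0]
    exact hzero'
  -- the Newton vertex bound
  obtain ⟨-, t, htpos, hv⟩ := hvertex
  have hc1 : PowerSeries.coeff 1 hhat = π := by
    have := hcoeff 0
    rwa [pow_zero, hHhat0] at this
  have hcQ : PowerSeries.coeff Q hhat = Hhat 1 := by
    have := hcoeff 1
    rwa [pow_one] at this
  set u : ℝ := t * ‖α‖ with hu
  have hupos : 0 < u := mul_pos htpos hαpos
  have hu1 : u < 1 := by
    have hv1 := hv 1 (by omega)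
    simp only [hc1, hcQ, pow_one] at hv1
    -- ‖π‖ * t ^ Q < ‖Hhat 1‖ * t
    have hQsplit : t ^ Q = t ^ (Q - 1) * t := by
      rw [← pow_succ]
      congr 1
      omega
    rw [← hα, hQsplit] at hv1
    have key : u ^ (Q - 1) < 1 := by
      have hlhs : ‖α‖ ^ (Q - 1) * ‖Hhat 1‖ * (t ^ (Q - 1) * t)
          = (‖Hhat 1‖ * t) * u ^ (Q - 1) := by
        rw [hu, mul_pow]; ring
      rw [hlhs] at hv1
      exact (mul_lt_iff_lt_one_right (mul_pos hH1pos htpos)).mp hv1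
    by_contra h
    push_neg at h
    exact absurd (one_le_pow₀ h (n := Q - 1)) (not_le.mpr key)
  -- bound on tail terms
  set r : ℝ := ‖Hhat 1‖ * ‖α‖ ^ Q * u ^ (Q ^ 2 - Q) with hr
  have hrπα : r < ‖π‖ * ‖α‖ := by
    have h1 : ‖Hhat 1‖ * ‖α‖ ^ Q = ‖π‖ * ‖α‖ := by
      rw [show Q = (Q - 1) + 1 by omega, pow_succ, ← mul_assoc, ← hα]; ring
    rw [hr, h1]
    have : u ^ (Q ^ 2 - Q) < 1 :=
      pow_lt_one₀ hupos.le hu1 (by have h := Nat.mul_le_mul_right Q hQ2; rw [pow_two]; omega)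
    nlinarith [mul_pos hπpos hαpos]
  have hterm : ∀ i : ℕ, ‖e (i + 2)‖ ≤ r := by
    intro i
    set N : ℕ := Q ^ (i + 2) with hN
    have hNQ : Q < N := by
      calc Q = Q ^ 1 := (pow_one Q).symm
        _ < Q ^ (i + 2) := Nat.pow_lt_pow_right (by omega) (by omega)
    have hvN := hv N (by omega)
    simp only [hcQ] at hvN
    have hcN : PowerSeries.coeff N hhat = Hhat (i + 2) := hcoeff (i + 2)
    rw [hcN] at hvN
    -- ‖Hhat (i+2)‖ * t ^ Q < ‖Hhat 1‖ * t ^ N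
    have hsplitN : t ^ N = t ^ Q * t ^ (N - Q) := by
      rw [← pow_add]; congr 1; omega
    rw [hsplitN, ← mul_assoc] at hvN
    have h2 : ‖Hhat (i + 2)‖ < ‖Hhat 1‖ * t ^ (N - Q) := by
      have h2' : ‖Hhat (i + 2)‖ * t ^ Q < ‖Hhat 1‖ * t ^ (N - Q) * t ^ Q := by
        calc ‖Hhat (i + 2)‖ * t ^ Q < ‖Hhat 1‖ * t ^ Q * t ^ (N - Q) := hvN
          _ = ‖Hhat 1‖ * t ^ (N - Q) * t ^ Q := by ring
      exact lt_of_mul_lt_mul_right h2' (le_of_lt (pow_pos htpos Q))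
    have h3 : ‖e (i + 2)‖ = ‖Hhat (i + 2)‖ * ‖α‖ ^ N := by
      rw [he]; simp [norm_mul, norm_pow, hN]
    rw [h3]
    calc ‖Hhat (i + 2)‖ * ‖α‖ ^ N ≤ ‖Hhat 1‖ * t ^ (N - Q) * ‖α‖ ^ N :=
          mul_le_mul_of_nonneg_right h2.le (by positivity)
      _ = ‖Hhat 1‖ * ‖α‖ ^ Q * u ^ (N - Q) := by
          rw [hu, mul_pow]
          rw [show ‖α‖ ^ N = ‖α‖ ^ Q * ‖α‖ ^ (N - Q) by rw [← pow_add]; congr 1; omega]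
          ring
      _ ≤ r := by
          rw [hr]
          refine mul_le_mul_of_nonneg_left ?_ (by positivity)
          refine pow_le_pow_of_le_one hupos.le hu1.le ?_
          have : Q ^ 2 ≤ N := by
            rw [hN]
            exact Nat.pow_le_pow_right (by omega) (by omega)
          omega
  have hTle : ‖T‖ ≤ r := myUltraTsumLe hsum2 (by positivity) hterm
  -- key inequality
  have hkey : ‖Hhat 1 * α ^ (Q - 1) + π‖ < ‖π‖ := by
    have hfact : (Hhat 1 * α ^ (Q - 1) + π) * α = -T := by
      have hpow : α ^ Q = α ^ (Q - 1) * α := by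
        rw [← pow_succ]; congr 1; omega
      have := hsplit
      rw [hpow] at this
      linear_combination this
    have hnorm : ‖Hhat 1 * α ^ (Q - 1) + π‖ * ‖α‖ = ‖T‖ := by
      rw [← norm_mul, hfact, norm_neg]
    have : ‖Hhat 1 * α ^ (Q - 1) + π‖ * ‖α‖ < ‖π‖ * ‖α‖ := by
      rw [hnorm]
      exact lt_of_le_of_lt hTle hrπα
    exact lt_of_mul_lt_mul_right this hαpos.le
  -- construct m'
  set A : C := Hhat 1 * α ^ (Q - 1) with hA
  have hAnorm : ‖A‖ = ‖π‖ := by rw [hA, norm_mul, norm_pow, mul_comm, hα]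
  have hA0 : A ≠ 0 := by
    intro h
    rw [h, norm_zero] at hAnorm
    exact hπpos.ne hAnorm
  refine ⟨(-π - A) / A, ?_, ?_, ?_, hkey⟩
  · rw [norm_div, hAnorm, div_lt_one hπpos]
    calc ‖-π - A‖ = ‖A + π‖ := by rw [show -π - A = -(A + π) by ring, norm_neg]
      _ < ‖π‖ := hkey
  · -- polynomial identity
    have hαQ : α ^ (Q - 1) = -π / ((1 + (-π - A) / A) * Hhat 1) := by
      rw [show 1 + (-π - A) / A = -π / A by field_simp; ring]
      rw [hA]
      field_simp
    have hC : π / ((1 + (-π - A) / A) * Hhat 1) = -(α ^ (Q - 1)) := by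
      rw [hαQ, neg_div, neg_neg]
    rw [hC, map_neg]
    haveI : Fintype F := hFfin.fintype
    classical
    have hcardF : Fintype.card F = Q := by
      rw [← hFcard, Set.Finite.card_toFinset]
      exact Fintype.card_congr (Equiv.subtypeEquivRight (fun x => Iff.rfl))
    have hpow : ∀ x ∈ F, x ^ Q = x := by
      intro x hx
      have h1 : (⟨x, hx⟩ : F) ^ Q = (⟨x, hx⟩ : F) := by
        rw [← hcardF]
        exact FiniteField.pow_card _
      have h2 := congrArg (Subtype.val) h1
      simpa using h2
    have hinjα : ∀ a ∈ hFfin.toFinset, ∀ b ∈ hFfin.toFinset,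
        a * α = b * α → a = b := fun a _ b _ h => mul_right_cancel₀ hα0 h
    have himg : ∏ y ∈ hFfin.toFinset.image (· * α), (Polynomial.X - Polynomial.C y)
        = ∏ x ∈ hFfin.toFinset, (Polynomial.X - Polynomial.C (x * α)) :=
      Finset.prod_image hinjα
    rw [← himg, show Polynomial.X ^ Q + -Polynomial.C (α ^ (Q - 1)) * Polynomial.X
      = Polynomial.X ^ Q - Polynomial.C (α ^ (Q - 1)) * Polynomial.X by ring]
    apply myProdLemma _ Q hQ2
    · rw [Finset.card_image_of_injective _ (fun a b h => mul_right_cancel₀ hα0 h), hFcard]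
    · intro y hy
      simp only [Finset.mem_image, Set.Finite.mem_toFinset, SetLike.mem_coe] at hy
      obtain ⟨x, hxF, rfl⟩ := hy
      have hx : x ^ Q = x := hpow x hxF
      have hαQpow : α ^ (Q - 1) * α = α ^ Q := by
        rw [← pow_succ]
        congr 1
        omega
      have hstep : (x * α) ^ Q - α ^ (Q - 1) * (x * α) = x * α ^ Q - x * (α ^ (Q - 1) * α) := by
        rw [mul_pow, hx]
        ring
      rw [hstep, hαQpow]
      ring
  · rw [show 1 + (-π - A) / A = -π / A by field_simp; ring]
    rw [hA]
    field_simp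
end
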